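/- arXiv:math/0511534 — 4 statements merged into one kernel-verified Lean document; each statement's English description precedes it below -/
import Mathlib

section
/- A commutative ring R is von Neumann regular if and only if R has no nonzero nilpotent elements and for every x in R, the annihilator of the annihilator of the principal ideal (x) equals (x). -/
def IsVonNeumannRegular (R : Type*) [Ring R] : Prop := ∀ x : R, ∃ y : R, x * y * x = x

lemma mem_ann_span_singleton {R : Type*} [CommRing R] (x r : R) :
    r ∈ Submodule.annihilator (Ideal.span {x} : Ideal R) ↔ r * x = 0 := by
  rw [Submodule.mem_annihilator]
  constructor
  · intro h
    simpa using h x (Ideal.mem_span_singleton_self x)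
  · intro h n hn
    obtain ⟨c, rfl⟩ := Ideal.mem_span_singleton.mp hn
    simp only [smul_eq_mul]
    calc r * (x * c) = (r * x) * c := by ring
    _ = 0 := by rw [h, zero_mul]

theorem stmt_5 (R : Type*) [CommRing R] :
    IsVonNeumannRegular R ↔
      (∀ x : R, IsNilpotent x → x = 0) ∧
        ∀ x : R,
          Submodule.annihilator (Submodule.annihilator (Ideal.span {x}) : Ideal R) =
            Ideal.span {x} := by
  constructor
  · intro h
    constructor
    · intro x hx
      obtain ⟨y, hy⟩ := h x
      obtain ⟨n, hn⟩ := hx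
      have key : ∀ m : ℕ, x = x ^ (m + 1) * y ^ m := by
        intro m
        induction m with
        | zero => simp
        | succ m ih =>
          calc x = x ^ (m + 1) * y ^ m := ih
          _ = x ^ m * y ^ m * x := by ring
          _ = x ^ m * y ^ m * (x * y * x) := by rw [hy]
          _ = x ^ (m + 2) * y ^ (m + 1) := by ring
      have := key n
      rw [pow_succ, hn] at this
      simpa using this
    · intro x
      obtain ⟨y, hy⟩ := h x
      apply le_antisymm
      · intro z hz
        rw [Submodule.mem_annihilator] at hz
        have h1 : (1 - x * y) ∈ Submodule.annihilator (Ideal.span {x} : Ideal R) := by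
          rw [mem_ann_span_singleton]
          calc (1 - x * y) * x = x - x * y * x := by ring
          _ = 0 := by rw [hy]; ring
        have h2 := hz _ h1
        simp only [smul_eq_mul] at h2
        have : z = x * (z * y) := by linear_combination h2
        rw [Ideal.mem_span_singleton]
        exact ⟨z * y, this⟩
      · intro z hz
        obtain ⟨c, rfl⟩ := Ideal.mem_span_singleton.mp hz
        rw [Submodule.mem_annihilator]
        intro r hr
        rw [mem_ann_span_singleton] at hr
        simp only [smul_eq_mul]
        calc x * c * r = c * (r * x) := by ring
        _ = 0 := by rw [hr, mul_zero]
  · rintro ⟨hred, hann⟩ x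
    have heq : Submodule.annihilator (Ideal.span {x} : Ideal R) =
        Submodule.annihilator (Ideal.span {x * x} : Ideal R) := by
      ext r
      rw [mem_ann_span_singleton, mem_ann_span_singleton]
      constructor
      · intro h
        calc r * (x * x) = (r * x) * x := by ring
        _ = 0 := by rw [h, zero_mul]
      · intro h
        apply hred
        exact ⟨2, by rw [mul_pow]; calc r ^ 2 * x ^ 2 = r * (r * (x * x)) := by ring
          _ = 0 := by rw [h, mul_zero]⟩
    have hspan : (Ideal.span {x} : Ideal R) = Ideal.span {x * x} := by
      rw [← hann x, heq, hann]
    have hx : x ∈ Ideal.span ({x * x} : Set R) := by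
      rw [← hspan]; exact Ideal.mem_span_singleton_self x
    obtain ⟨c, hc⟩ := Ideal.mem_span_singleton.mp hx
    exact ⟨c, by rw [show x * c * x = x * x * c by ring, ← hc]⟩
end

section
/- Let R be a commutative ring satisfying: (1) R has no nonzero nilpotent elements, and (2) for all x in R, ann(ann((x))) = (x). Then for every x in R, (x) = (x^2). -/
theorem stmt_7 (R : Type*) [CommRing R] (h1 : ∀ x : R, IsNilpotent x → x = 0)
    (h2 : ∀ x : R,
      Submodule.annihilator (Submodule.annihilator (Ideal.span {x}) : Ideal R) =
        Ideal.span {x}) (x : R) :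
    Ideal.span {x} = Ideal.span {x ^ 2} := by
  have hann : (Ideal.span {x} : Ideal R).annihilator = (Ideal.span {x ^ 2}).annihilator := by
    ext r
    simp only [Ideal.span, Submodule.mem_annihilator_span_singleton, smul_eq_mul]
    constructor
    · intro h
      rw [pow_two, ← mul_assoc, h, zero_mul]
    · intro h
      have : (r * x) ^ 2 = 0 := by linear_combination r * h
      have := h1 (r * x) ⟨2, this⟩
      exact this
  calc Ideal.span {x} = (Ideal.span {x} : Ideal R).annihilator.annihilator := (h2 x).symm
    _ = (Ideal.span {x ^ 2} : Ideal R).annihilator.annihilator := by rw [hann]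
    _ = Ideal.span {x ^ 2} := h2 (x ^ 2)
end

section
/- Every module over a von Neumann regular ring is flat. -/
/-!
In a von Neumann regular ring every ideal `I` satisfies `I ≤ I * I`, since `x = (x * y) * x`.
By Nakayama, a finitely generated such ideal contains an element `e` acting as the identity on
it, so `r ↦ r * e` retracts the inclusion `I → R`. A split injection stays injective after
tensoring with `M`, and injectivity of `I ⊗ M → R ⊗ M` for finitely generated `I` is flatness.
-/

open LinearMap

theorem IsVonNeumannRegular.le_mul_self {R : Type*} [CommRing R] (h : IsVonNeumannRegular R)
    (I : Ideal R) : I ≤ I * I := by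
  intro x hx
  obtain ⟨y, hy⟩ := h x
  rw [← hy]
  exact Ideal.mul_mem_mul (I.mul_mem_right y hx) hx

theorem Ideal.exists_comp_subtype_eq_id_of_fg_of_le_mul_self {R : Type*} [CommRing R]
    {I : Ideal R} (hI : I.FG) (h : I ≤ I * I) :
    ∃ g : R →ₗ[R] I, g ∘ₗ I.subtype = LinearMap.id := by
  obtain ⟨e, he, hid⟩ := Submodule.exists_mem_and_smul_eq_self_of_fg_of_le_smul I I hI h
  refine ⟨toSpanSingleton R I ⟨e, he⟩, ?_⟩
  ext ⟨x, hx⟩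
  simpa [mul_comm] using hid x hx

theorem Module.Flat.of_forall_fg_le_mul_self {R : Type*} [CommRing R]
    (H : ∀ I : Ideal R, I.FG → I ≤ I * I) (M : Type*) [AddCommGroup M] [Module R M] :
    Module.Flat R M := by
  rw [Module.Flat.iff_rTensor_injective]
  intro I hI
  obtain ⟨g, hg⟩ := Ideal.exists_comp_subtype_eq_id_of_fg_of_le_mul_self hI (H I hI)
  exact injective_of_comp_eq_id _ (g.rTensor M) (by rw [← rTensor_comp, hg, rTensor_id])

theorem stmt_10 (R : Type*) [CommRing R] (h : IsVonNeumannRegular R)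
    (M : Type*) [AddCommGroup M] [Module R M] : Module.Flat R M :=
  Module.Flat.of_forall_fg_le_mul_self (fun I _ => h.le_mul_self I) M
end

section
/- Let R = k[x_1, x_2, ...]/(x_i x_j for i ≠ j) where k is a field. Then ann(x_1 + x_2) ⊆ ann(x_1) but x_1 ∉ (x_1 + x_2); in particular R does not satisfy the double annihilator condition ann(ann((x))) = (x) for all x. -/
set_option synthInstance.maxHeartbeats 1000000

open MvPolynomial

noncomputable def phiAux (k : Type*) [Field k] (i : ℕ) :
    MvPolynomial ℕ k →ₐ[k] Polynomial k :=
  aeval (fun j => if j = i then Polynomial.X else 0)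

lemma phiAux_X_self (k : Type*) [Field k] (i : ℕ) :
    phiAux k i (X i) = Polynomial.X := by simp [phiAux]

lemma phiAux_X_ne (k : Type*) [Field k] {i j : ℕ} (h : j ≠ i) :
    phiAux k i (X j) = 0 := by simp [phiAux, h]

-- key coefficient lemma
lemma phiAux_coeff (k : Type*) [Field k] (i n : ℕ) (p : MvPolynomial ℕ k) :
    (phiAux k i p).coeff n = MvPolynomial.coeff (Finsupp.single i n) p := by
  have hterm : ∀ m ∈ p.support,
      (Polynomial.C (MvPolynomial.coeff m p) *
        ∏ j ∈ m.support, (if j = i then (Polynomial.X : Polynomial k) else 0) ^ m j).coeff n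
      = if m = Finsupp.single i n then MvPolynomial.coeff m p else 0 := by
    intro m _
    by_cases hsub : m.support ⊆ {i}
    · obtain ⟨b, hb⟩ := Finsupp.support_subset_singleton'.mp hsub
      subst hb
      have hprod : (∏ j ∈ (Finsupp.single i b).support,
          (if j = i then (Polynomial.X : Polynomial k) else 0) ^ (Finsupp.single i b) j)
          = Polynomial.X ^ b := by
        by_cases hb0 : b = 0
        · subst hb0; simp
        · rw [Finsupp.support_single_ne_zero _ hb0]
          simp
      rw [hprod, Polynomial.coeff_C_mul, Polynomial.coeff_X_pow]
      rcases eq_or_ne b n with rfl | hbn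
      · simp
      · rw [if_neg (Ne.symm hbn), mul_zero, if_neg (by
          intro h
          exact hbn (by simpa using (Finsupp.single_injective i) h))]
    · have : ∃ j ∈ m.support, j ≠ i := by
        by_contra h
        push_neg at h
        exact hsub fun j hj => Finset.mem_singleton.mpr (h j hj)
      obtain ⟨j, hj, hji⟩ := this
      have hprod : (∏ l ∈ m.support,
          (if l = i then (Polynomial.X : Polynomial k) else 0) ^ m l) = 0 := by
        apply Finset.prod_eq_zero hj
        rw [if_neg hji]
        exact zero_pow (Finsupp.mem_support_iff.mp hj)
      rw [hprod, mul_zero, Polynomial.coeff_zero]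
      rw [if_neg (by
        intro h
        apply hsub
        rw [h]
        exact Finsupp.support_single_subset)]
  have heq : phiAux k i p = ∑ m ∈ p.support,
      Polynomial.C (MvPolynomial.coeff m p) *
        ∏ j ∈ m.support, (if j = i then (Polynomial.X : Polynomial k) else 0) ^ m j := by
    rw [phiAux, aeval_def, eval₂_eq]
    rfl
  rw [heq, Polynomial.finset_sum_coeff]
  rw [Finset.sum_congr rfl hterm, Finset.sum_ite_eq' p.support (Finsupp.single i n)
    (fun m => MvPolynomial.coeff m p)]
  by_cases h : Finsupp.single i n ∈ p.support
  · rw [if_pos h]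
  · rw [if_neg h]
    exact (MvPolynomial.notMem_support_iff.mp h).symm

lemma phiAux_mem_J (k : Type*) [Field k] (i : ℕ) (q : MvPolynomial ℕ k)
    (hq : q ∈ Ideal.span {p : MvPolynomial ℕ k | ∃ i j : ℕ, i ≠ j ∧ p = X i * X j}) :
    phiAux k i q = 0 := by
  have h : Ideal.span {p : MvPolynomial ℕ k | ∃ i j : ℕ, i ≠ j ∧ p = X i * X j} ≤
      RingHom.ker (phiAux k i).toRingHom := by
    rw [Ideal.span_le]
    rintro p ⟨a, b, hab, rfl⟩
    simp only [SetLike.mem_coe, RingHom.mem_ker, AlgHom.toRingHom_eq_coe,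
      RingHom.coe_coe, map_mul]
    by_cases ha : a = i
    · subst ha
      rw [phiAux_X_ne k (Ne.symm hab), mul_zero]
    · rw [phiAux_X_ne k ha, zero_mul]
  exact h hq

open Finsupp in
lemma mem_J_of_coeff (k : Type*) [Field k] (p : MvPolynomial ℕ k)
    (h : ∀ m : ℕ →₀ ℕ, m.support.card ≤ 1 → MvPolynomial.coeff m p = 0) :
    p ∈ Ideal.span {p : MvPolynomial ℕ k | ∃ i j : ℕ, i ≠ j ∧ p = X i * X j} := by
  rw [MvPolynomial.as_sum p]
  apply Ideal.sum_mem
  intro m hm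
  by_cases hc : m.support.card ≤ 1
  · rw [h m hc, MvPolynomial.monomial_zero]
    exact Ideal.zero_mem _
  · push_neg at hc
    obtain ⟨a, ha, b, hb, hab⟩ := Finset.one_lt_card.mp hc
    have h1 : m a ≠ 0 := Finsupp.mem_support_iff.mp ha
    have h2 : m b ≠ 0 := Finsupp.mem_support_iff.mp hb
    have hle : Finsupp.single a 1 + Finsupp.single b 1 ≤ m := by
      intro x
      simp only [Finsupp.coe_add, Pi.add_apply, Finsupp.single_apply]
      split_ifs with hax hbx hbx
      · exact absurd (hax.trans hbx.symm) hab
      · subst hax; omega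
      · subst hbx; omega
      · omega
    have key : (monomial m) (MvPolynomial.coeff m p) =
        (monomial (m - (Finsupp.single a 1 + Finsupp.single b 1)))
          (MvPolynomial.coeff m p) * (X a * X b) := by
      rw [MvPolynomial.X, MvPolynomial.X, MvPolynomial.monomial_mul,
        MvPolynomial.monomial_mul, tsub_add_cancel_of_le hle, mul_one, mul_one]
    rw [key]
    exact Ideal.mul_mem_left _ _ (Ideal.subset_span ⟨a, b, hab, rfl⟩)

lemma mem_J_of_phi (k : Type*) [Field k] (p : MvPolynomial ℕ k)
    (h : ∀ i, phiAux k i p = 0) :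
    p ∈ Ideal.span {p : MvPolynomial ℕ k | ∃ i j : ℕ, i ≠ j ∧ p = X i * X j} := by
  apply mem_J_of_coeff
  intro m hm
  obtain ⟨a, b, rfl⟩ := Finsupp.card_support_le_one'.mp hm
  rw [← phiAux_coeff, h a, Polynomial.coeff_zero]

set_option maxHeartbeats 1000000 in
theorem stmt_19 (k : Type*) [Field k] :
    let J : Ideal (MvPolynomial ℕ k) :=
      Ideal.span {p | ∃ i j : ℕ, i ≠ j ∧ p = X i * X j}
    let x₁ : MvPolynomial ℕ k ⧸ J := Ideal.Quotient.mk J (X 0)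
    let x₂ : MvPolynomial ℕ k ⧸ J := Ideal.Quotient.mk J (X 1)
    (∀ r, r * (x₁ + x₂) = 0 → r * x₁ = 0) ∧
      x₁ ∉ Ideal.span {x₁ + x₂} ∧
      ¬ (∀ x : MvPolynomial ℕ k ⧸ J,
          Submodule.annihilator
            (Submodule.annihilator (Ideal.span {x}) : Ideal (MvPolynomial ℕ k ⧸ J)) =
            Ideal.span {x}) := by
  intro J x₁ x₂
  have part1 : ∀ r, r * (x₁ + x₂) = 0 → r * x₁ = 0 := by
    intro r hr
    obtain ⟨p, rfl⟩ := Ideal.Quotient.mk_surjective r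
    rw [show x₁ = Ideal.Quotient.mk J (X 0) from rfl,
      show x₂ = Ideal.Quotient.mk J (X 1) from rfl, ← map_add, ← map_mul,
      Ideal.Quotient.eq_zero_iff_mem] at hr
    rw [show x₁ = Ideal.Quotient.mk J (X 0) from rfl, ← map_mul,
      Ideal.Quotient.eq_zero_iff_mem]
    have h0 : phiAux k 0 (p * (X 0 + X 1)) = 0 := phiAux_mem_J k 0 _ hr
    rw [map_mul, map_add, phiAux_X_self, phiAux_X_ne k (by norm_num : (1:ℕ) ≠ 0),
      add_zero] at h0
    apply mem_J_of_phi
    intro i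
    rw [map_mul]
    rcases eq_or_ne i 0 with rfl | hi
    · rw [phiAux_X_self]
      exact h0
    · rw [phiAux_X_ne k (Ne.symm hi), mul_zero]
  have part2 : x₁ ∉ Ideal.span {x₁ + x₂} := by
    intro hx
    rw [Ideal.mem_span_singleton] at hx
    obtain ⟨c, hc⟩ := hx
    obtain ⟨p, rfl⟩ := Ideal.Quotient.mk_surjective c
    rw [show x₁ = Ideal.Quotient.mk J (X 0) from rfl,
      show x₂ = Ideal.Quotient.mk J (X 1) from rfl] at hc
    have hmem : (X 0 + X 1) * p - X 0 ∈ J := by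
      rw [← Ideal.Quotient.eq_zero_iff_mem, map_sub, map_mul, map_add, sub_eq_zero]
      exact hc.symm
    have h0 := phiAux_mem_J k 0 _ hmem
    have h1 := phiAux_mem_J k 1 _ hmem
    rw [map_sub, map_mul, map_add, phiAux_X_self, phiAux_X_ne k (by norm_num : (1:ℕ) ≠ 0),
      add_zero, sub_eq_zero] at h0
    rw [map_sub, map_mul, map_add, phiAux_X_self, phiAux_X_ne k (by norm_num : (0:ℕ) ≠ 1),
      zero_add, sub_zero] at h1
    -- h0 : X * φ0 p = X,  h1 : X * φ1 p = 0
    have hp0 : phiAux k 0 p = 1 := by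
      have := mul_left_cancel₀ (Polynomial.X_ne_zero (R := k)) (h0.trans (mul_one _).symm)
      exact this
    have hp1 : phiAux k 1 p = 0 := by
      rcases mul_eq_zero.mp h1 with h | h
      · exact absurd h Polynomial.X_ne_zero
      · exact h
    have hcoeff0 : (phiAux k 0 p).coeff 0 = (phiAux k 1 p).coeff 0 := by
      rw [phiAux_coeff, phiAux_coeff, Finsupp.single_zero, Finsupp.single_zero]
    rw [hp0, hp1, Polynomial.coeff_one, Polynomial.coeff_zero] at hcoeff0
    simp at hcoeff0
  refine ⟨part1, part2, ?_⟩
  intro H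
  apply part2
  rw [← H (x₁ + x₂)]
  rw [Submodule.mem_annihilator]
  intro r hr
  rw [Submodule.mem_annihilator] at hr
  have := hr (x₁ + x₂) (Ideal.subset_span rfl)
  rw [smul_eq_mul] at this ⊢
  rw [mul_comm]
  exact part1 r this
end
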